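/- Let (R, m) be a commutative Noetherian local ring and let M ⊆ N be a pure-injective hull of the R-module M. Then Koatt(N) = Koatt(M). -/

import Mathlib

open IsLocalRing TensorProduct

universe u v w x

/-- A linear map `f : A → B` is pure if `X ⊗ f` is injective for every
finitely generated `R`-module `X`. -/
def IsPureMap {R : Type u} [CommRing R] {A : Type v} {B : Type w}
    [AddCommGroup A] [Module R A] [AddCommGroup B] [Module R B] (f : A →ₗ[R] B) : Prop :=
  ∀ (X : Type u) [AddCommGroup X] [Module R X], Module.Finite R X →
    Function.Injective (LinearMap.lTensor X f)

/-- A submodule is pure if its inclusion is a pure map. -/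
def IsPureSubmodule {R : Type u} [CommRing R] {B : Type v} [AddCommGroup B] [Module R B]
    (A : Submodule R B) : Prop :=
  IsPureMap A.subtype

/-- A pure submodule `A ⊆ B` is pure-essential if for every submodule `X` with `X ⊓ A = ⊥`
such that `(X + A)/X` is pure in `B/X`, one has `X = ⊥`. -/
def IsPureEssential {R : Type u} [CommRing R] {B : Type v} [AddCommGroup B] [Module R B]
    (A : Submodule R B) : Prop :=
  IsPureSubmodule A ∧
    ∀ X : Submodule R B, X ⊓ A = ⊥ → IsPureSubmodule (A.map X.mkQ) → X = ⊥

/-- `N` is pure-injective if every pure embedding of `N` into another module splits. -/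
def IsPureInjective (R : Type u) [CommRing R] (N : Type v) [AddCommGroup N] [Module R N] : Prop :=
  ∀ (B : Type w) [AddCommGroup B] [Module R B] (ι : N →ₗ[R] B), IsPureMap ι →
    ∃ π : B →ₗ[R] N, π ∘ₗ ι = LinearMap.id

/-- `ι : M → N` is a pure-injective hull: a pure-essential extension with `N` pure-injective. -/
def IsPureInjectiveHull {R : Type u} [CommRing R] {M : Type v} {N : Type w}
    [AddCommGroup M] [Module R M] [AddCommGroup N] [Module R N] (ι : M →ₗ[R] N) : Prop :=
  Function.Injective ι ∧ IsPureMap ι ∧ IsPureEssential (LinearMap.range ι) ∧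
    IsPureInjective.{u, w, x} R N

/-- `Koatt M`: the set of prime ideals that are annihilators of submodules of `M`. -/
def Koatt (R : Type u) [CommRing R] (M : Type v) [AddCommGroup M] [Module R M] :
    Set (Ideal R) :=
  {p | p.IsPrime ∧ ∃ U : Submodule R M, U.annihilator = p}

/-!
Let `p = ann U` with `U ⊆ N`. Then `p = ann (0 :_N p)`, so it suffices to show that every `r`
killing `(0 :_M p)` kills `(0 :_N p)`; the converse inclusion `Koatt M ⊆ Koatt N` holds because
`ι` is injective. Put `X = r • (0 :_N p)` and write `p = (a₁, …, aₛ)`. Membership of `x` in `X`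
is the solvability of the linear system `x = r y, aᵢ y = 0`, so purity of `M ⊆ N` shows that
`M → N ⧸ X` is still a pure embedding. Pure-essentiality of `M ⊆ N` then forces `X = 0`.
-/

open Submodule (torsionBySet)

namespace IsPureMap

variable {R : Type u} [CommRing R] {A : Type v} {B : Type w} [AddCommGroup A] [Module R A]
  [AddCommGroup B] [Module R B] {f : A →ₗ[R] B}

theorem injective (hf : IsPureMap f) : Function.Injective f := fun x y hxy => by
  have h := hf R inferInstance
    (show LinearMap.lTensor R f (1 ⊗ₜ x) = LinearMap.lTensor R f (1 ⊗ₜ y) by simp [hxy])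
  simpa using congrArg (TensorProduct.lid R A) h

theorem isPureSubmodule_range (hf : IsPureMap f) : IsPureSubmodule (LinearMap.range f) := by
  intro X _ _ hX
  refine Function.Injective.of_comp_right (g := LinearMap.lTensor X f.rangeRestrict) ?_
    (LinearMap.lTensor_surjective X f.surjective_rangeRestrict)
  rw [← LinearMap.coe_comp, ← LinearMap.lTensor_comp]
  exact hf X hX

end IsPureMap

section Tensor

variable {R : Type u} [CommRing R]

theorem LinearMap.rTensor_lTensor_apply {A B C D : Type*} [AddCommGroup A] [Module R A]
    [AddCommGroup B] [Module R B] [AddCommGroup C] [Module R C] [AddCommGroup D] [Module R D]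
    (f : A →ₗ[R] B) (g : C →ₗ[R] D) (z : A ⊗[R] C) :
    LinearMap.rTensor D f (LinearMap.lTensor A g z) =
      LinearMap.lTensor B g (LinearMap.rTensor C f z) := by
  rw [← LinearMap.comp_apply, LinearMap.rTensor_comp_lTensor, ← LinearMap.lTensor_comp_rTensor,
    LinearMap.comp_apply]

theorem Module.annihilator_le_annihilator_tensor (W T : Type*) [AddCommGroup W] [Module R W]
    [AddCommGroup T] [Module R T] :
    Module.annihilator R T ≤ Module.annihilator R (W ⊗[R] T) := by
  intro a ha
  rw [Module.mem_annihilator] at ha ⊢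
  intro z
  induction z using TensorProduct.induction_on with
  | zero => exact smul_zero a
  | tmul x y => rw [← tmul_smul, ha, tmul_zero]
  | add z z' hz hz' => rw [smul_add, hz, hz', add_zero]

theorem LinearMap.rTensor_pi_smul_eq_zero_iff {P X σ : Type*} [AddCommGroup P] [Module R P]
    [AddCommGroup X] [Module R X] [Fintype σ] [DecidableEq σ] (a : σ → R) (z : P ⊗[R] X) :
    LinearMap.rTensor X (LinearMap.pi fun i => a i • LinearMap.id) z = 0 ↔
      ∀ i, a i • z = 0 := by
  have h : TensorProduct.piLeft R X (fun _ : σ => P)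
      (LinearMap.rTensor X (LinearMap.pi fun i => a i • LinearMap.id) z) = fun i => a i • z := by
    induction z using TensorProduct.induction_on with
    | zero => ext; simp
    | tmul x y => ext i; simp [smul_tmul']
    | add z z' hz hz' => simp only [map_add, hz, hz', smul_add]; rfl
  rw [← (TensorProduct.piLeft R X fun _ : σ => P).map_eq_zero_iff, h, funext_iff]
  rfl

theorem Submodule.annihilator_torsionBySet_le_pi_tensor {M : Type*} [AddCommGroup M]
    [Module R M] (S : Set R) (ι : Type*) [Fintype ι] [DecidableEq ι] :
    (torsionBySet R M S).annihilator ≤ (torsionBySet R ((ι → R) ⊗[R] M) S).annihilator := by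
  let e : (ι → R) ⊗[R] M ≃ₗ[R] (ι → M) := TensorProduct.piLeft R M (fun _ => R) ≪≫ₗ
    LinearEquiv.piCongrRight fun _ => TensorProduct.lid R M
  intro r hr
  rw [Submodule.mem_annihilator] at hr ⊢
  intro z hz
  rw [← e.map_eq_zero_iff, map_smul]
  ext i
  refine hr _ ((Submodule.mem_torsionBySet_iff _ _).2 fun a => ?_)
  simpa using congrFun (congrArg e ((Submodule.mem_torsionBySet_iff _ _).1 hz a)) i

end Tensor

section Pushout

variable {R : Type u} [CommRing R] {P Y G : Type*} [AddCommGroup P] [Module R P]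
  [AddCommGroup Y] [Module R Y] [AddCommGroup G] [Module R G]

/-- The first leg of the pushout of `f` and `-g`. -/
noncomputable def pushoutInl (f : P →ₗ[R] Y) (g : P →ₗ[R] G) :
    Y →ₗ[R] (Y × G) ⧸ LinearMap.range (f.prod g) :=
  (LinearMap.range (f.prod g)).mkQ ∘ₗ LinearMap.inl R Y G

variable (f : P →ₗ[R] Y) (g : P →ₗ[R] G) {X : Type*} [AddCommGroup X] [Module R X]

theorem rTensor_pushoutInl_rTensor_eq_zero {z : P ⊗[R] X}
    (hz : LinearMap.rTensor X g z = 0) :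
    LinearMap.rTensor X (pushoutInl f g) (LinearMap.rTensor X f z) = 0 := by
  have h : pushoutInl f g ∘ₗ f =
      -((LinearMap.range (f.prod g)).mkQ ∘ₗ LinearMap.inr R Y G ∘ₗ g) := by
    ext x
    have : (LinearMap.range (f.prod g)).mkQ (f x, g x) = 0 :=
      (Submodule.Quotient.mk_eq_zero _).2 ⟨x, rfl⟩
    rw [LinearMap.neg_apply, eq_neg_iff_add_eq_zero, ← this]
    simp [pushoutInl, ← Submodule.Quotient.mk_add]
  rw [← LinearMap.comp_apply, ← LinearMap.rTensor_comp, h]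
  simp only [LinearMap.rTensor_neg, LinearMap.rTensor_comp, LinearMap.neg_apply,
    LinearMap.comp_apply, hz, map_zero, neg_zero]

theorem injective_rTensor_pushoutInl
    (h : ∀ z : P ⊗[R] X, LinearMap.rTensor X g z = 0 → LinearMap.rTensor X f z = 0) :
    Function.Injective (LinearMap.rTensor X (pushoutInl f g)) := by
  rw [injective_iff_map_eq_zero]
  intro t ht
  rw [pushoutInl, LinearMap.rTensor_comp, LinearMap.comp_apply] at ht
  obtain ⟨z, hz⟩ := (rTensor_exact X (LinearMap.exact_map_mkQ_range (f.prod g))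
    (Submodule.mkQ_surjective _) _).1 ht
  have hfst := congrArg (LinearMap.rTensor X (LinearMap.fst R Y G)) hz
  have hsnd := congrArg (LinearMap.rTensor X (LinearMap.snd R Y G)) hz
  rw [← LinearMap.rTensor_comp_apply, ← LinearMap.rTensor_comp_apply, LinearMap.fst_prod,
    LinearMap.fst_comp_inl, LinearMap.rTensor_id, LinearMap.id_apply] at hfst
  rw [← LinearMap.rTensor_comp_apply, ← LinearMap.rTensor_comp_apply, LinearMap.snd_prod,
    LinearMap.snd_comp_inl, LinearMap.rTensor_zero, LinearMap.zero_apply] at hsnd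
  rw [← hfst, h z hsnd]

end Pushout

theorem LinearMap.injective_lTensor_mkQ_range_comp {R : Type u} [CommRing R]
    {M N T Y : Type*} [AddCommGroup M] [Module R M] [AddCommGroup N] [Module R N]
    [AddCommGroup T] [Module R T] [AddCommGroup Y] [Module R Y] (h : T →ₗ[R] N)
    (f : M →ₗ[R] N) (H : ∀ t w, LinearMap.lTensor Y f t = LinearMap.lTensor Y h w → t = 0) :
    Function.Injective (LinearMap.lTensor Y ((LinearMap.range h).mkQ ∘ₗ f)) := by
  rw [injective_iff_map_eq_zero]
  intro t ht
  rw [LinearMap.lTensor_comp, LinearMap.comp_apply] at ht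
  obtain ⟨w, hw⟩ := (lTensor_exact Y (LinearMap.exact_subtype_mkQ _)
    (Submodule.mkQ_surjective _) _).1 ht
  obtain ⟨w, rfl⟩ := LinearMap.lTensor_surjective Y h.surjective_rangeRestrict w
  rw [← LinearMap.lTensor_comp_apply] at hw
  exact H t w hw.symm

section PureEssential

variable {R : Type u} [CommRing R] {M : Type v} {N : Type w} [AddCommGroup M] [Module R M]
  [AddCommGroup N] [Module R N] {ι : M →ₗ[R] N}

theorem IsPureMap.mkQ_range_smul_torsionBySet_comp (hι : IsPureMap ι) {S : Set R}
    (hS : S.Finite) {r : R} (hr : r ∈ (torsionBySet R M S).annihilator) :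
    IsPureMap ((LinearMap.range (r • (torsionBySet R N S).subtype)).mkQ ∘ₗ ι) := by
  classical
  intro Y _ _ hY
  refine LinearMap.injective_lTensor_mkQ_range_comp _ _ fun t w htw => ?_
  have : Fintype S := hS.fintype
  obtain ⟨k, q, hq⟩ := Module.Finite.exists_fin' R Y
  let g : (Fin k → R) →ₗ[R] (S → Fin k → R) := LinearMap.pi fun a => (a : R) • LinearMap.id
  -- `t` dies in `Q ⊗ N` for the finitely generated pushout `Q` of `r • q` and `-g`, and
  -- `Y ⊗ M → Q ⊗ M` is injective because `(Fin k → R) ⊗ M ≅ Mᵏ`; purity of `ι` on `Q` concludes.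
  have hN : LinearMap.rTensor N (pushoutInl (r • q) g) (LinearMap.lTensor Y ι t) = 0 := by
    obtain ⟨w, rfl⟩ := LinearMap.rTensor_surjective _ hq w
    have hlift : LinearMap.lTensor Y (r • (torsionBySet R N S).subtype) (LinearMap.rTensor _ q w)
        = LinearMap.rTensor N (r • q) (LinearMap.lTensor _ (torsionBySet R N S).subtype w) := by
      rw [LinearMap.rTensor_lTensor_apply, LinearMap.lTensor_smul, LinearMap.rTensor_smul,
        LinearMap.smul_apply, LinearMap.smul_apply, map_smul]
    rw [htw, hlift]
    refine rTensor_pushoutInl_rTensor_eq_zero _ _ ?_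
    rw [LinearMap.rTensor_pi_smul_eq_zero_iff]
    intro a
    have ha : (a : R) ∈ Module.annihilator R (torsionBySet R N S) :=
      (Module.isTorsionBySet_iff_subset_annihilator _ _).1
        (Submodule.torsionBySet_isTorsionBySet S) a.2
    rw [← map_smul, Module.mem_annihilator.1 (Module.annihilator_le_annihilator_tensor _ _ ha),
      map_zero]
  have hM : Function.Injective (LinearMap.rTensor M (pushoutInl (r • q) g)) := by
    refine injective_rTensor_pushoutInl _ _ fun z hz => ?_
    rw [LinearMap.rTensor_pi_smul_eq_zero_iff] at hz
    have hrz : r • z = 0 := Submodule.mem_annihilator.1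
      (Submodule.annihilator_torsionBySet_le_pi_tensor S (Fin k) hr) z
      ((Submodule.mem_torsionBySet_iff _ _).2 hz)
    rw [LinearMap.rTensor_smul, LinearMap.smul_apply, ← map_smul, hrz, map_zero]
  refine hM (hι _ inferInstance ?_)
  rw [← LinearMap.rTensor_lTensor_apply, hN, map_zero, map_zero]

theorem annihilator_torsionBySet_le_of_isPureEssential (hι : IsPureMap ι)
    (hess : IsPureEssential (LinearMap.range ι)) {S : Set R} (hS : S.Finite) :
    (torsionBySet R M S).annihilator ≤ (torsionBySet R N S).annihilator := by
  intro r hr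
  set X := LinearMap.range (r • (torsionBySet R N S).subtype)
  have hpure := hι.mkQ_range_smul_torsionBySet_comp hS hr
  have hdisj : X ⊓ LinearMap.range ι = ⊥ := by
    rw [eq_bot_iff]
    rintro _ ⟨hX, m, rfl⟩
    have : m = 0 := hpure.injective <| by
      rw [LinearMap.comp_apply, map_zero, Submodule.mkQ_apply, Submodule.Quotient.mk_eq_zero]
      exact hX
    simp [this]
  have hX : X = ⊥ :=
    hess.2 X hdisj (by rw [← LinearMap.range_comp]; exact hpure.isPureSubmodule_range)
  refine Submodule.mem_annihilator.2 fun n hn => ?_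
  have : r • n ∈ X := ⟨⟨n, hn⟩, rfl⟩
  simpa [hX] using this

end PureEssential

theorem koatt_pureInjectiveHull_eq
    (R : Type u) [CommRing R] [IsNoetherianRing R]
    {M : Type v} {N : Type w} [AddCommGroup M] [Module R M] [AddCommGroup N] [Module R N]
    (ι : M →ₗ[R] N) (hι : IsPureInjectiveHull ι) :
    Koatt R N = Koatt R M := by
  obtain ⟨hinj, hpure, hess, -⟩ := hι
  ext p
  refine ⟨fun ⟨hp, U, hU⟩ => ⟨hp, torsionBySet R M p, le_antisymm ?_ ?_⟩,
    fun ⟨hp, U, hU⟩ => ⟨hp, U.map ι, ?_⟩⟩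
  · obtain ⟨S, hS⟩ := (IsNoetherian.noetherian p : p.FG)
    calc (torsionBySet R M p).annihilator = (torsionBySet R M S).annihilator := by
          rw [← hS, ← Submodule.torsionBySet_eq_torsionBySet_span]
      _ ≤ (torsionBySet R N S).annihilator :=
          annihilator_torsionBySet_le_of_isPureEssential hpure hess S.finite_toSet
      _ = (torsionBySet R N p).annihilator := by
          rw [← hS, ← Submodule.torsionBySet_eq_torsionBySet_span]
      _ ≤ U.annihilator := Submodule.annihilator_mono (hU ▸ (Submodule.torsion_gc R N).le_u_l U)
      _ = p := hU
  · exact (Submodule.torsion_gc R M).l_u_le p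
  · rw [← hU]
    exact (Submodule.equivMapOfInjective ι hinj U).annihilator_eq.symm
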